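/- Let γ > 1 and let φ be the solution of the ODE Cauchy problem φ'' + 2φ' + φ − γ·φ² = 0 on (0,∞) with φ(0) = 1/(2γ) and φ'(0) = 0. Then φ'(z) < 0 and φ'(z)/φ(z) ≥ −1 for all z > 0, and there exists a constant B > 0 such that φ(z)/(z·e^{−z}) → B as z → +∞. -/

import Mathlib

/-!
With `ψ = e^z φ` one has `ψ' = v := e^z (φ + φ')` and `v' = γ e^z φ² ≥ 0`, so
`v ≥ v(0) = 1/(2γ)`; this gives `φ > 0` and `φ'/φ ≥ -1`. The energy `φ'²/2 + φ²/2 - γφ³/3`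
decreases, which keeps `φ` below `1/γ`, so `(e^{2z} φ')' = e^{2z} φ (γφ - 1) < 0` and `φ`
decreases. Comparing the same derivative with `φ(z)` on `[0, z]` shows that `φ` becomes
arbitrarily small. Once `γφ ≤ 1/16` the equation factors as `(D + 5/4)(D + 3/4) φ ≤ 0`, so
`φ = O(e^{-3z/4})` and `v' = O(e^{-z/2})`. Hence `v` increases to a finite limit `B > 0`, and
`ψ(z)/z → B` as well.
-/

open Real Filter

noncomputable section

/-- `φ` solves the Cauchy problem `φ'' + 2φ' + φ - γ φ² = 0` on `(0,∞)`,
with `φ(0) = 1/(2γ)` and `φ'(0) = 0`. -/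
def SolvesPhiODE (φ : ℝ → ℝ) (γ : ℝ) : Prop :=
  (∀ z : ℝ, DifferentiableAt ℝ φ z ∧ DifferentiableAt ℝ (deriv φ) z) ∧
  (∀ z : ℝ, 0 < z →
    deriv (deriv φ) z + 2 * deriv φ z + φ z - γ * φ z ^ 2 = 0) ∧
  φ 0 = 1 / (2 * γ) ∧ deriv φ 0 = 0

open Set Topology Asymptotics

section Comparison

variable {f g f' g' : ℝ → ℝ} {a b : ℝ}

theorem sub_le_sub_of_hasDerivAt_le (hab : a ≤ b) (hf' : ∀ x ∈ Ioo a b, HasDerivAt f (f' x) x)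
    (hg' : ∀ x ∈ Ioo a b, HasDerivAt g (g' x) x) (hf : ContinuousOn f (Icc a b))
    (hg : ContinuousOn g (Icc a b)) (hle : ∀ x ∈ Ioo a b, f' x ≤ g' x) :
    f b - f a ≤ g b - g a := by
  rcases hab.eq_or_lt with rfl | hlt
  · simp
  obtain ⟨c, hc, hslope⟩ := exists_hasDerivAt_eq_slope (fun x => f x - g x)
    (fun x => f' x - g' x) hlt (hf.sub hg) fun x hx => (hf' x hx).sub (hg' x hx)
  have hslope_nonpos : ((f b - g b) - (f a - g a)) / (b - a) ≤ 0 := by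
    rw [← hslope]; linarith [hle c hc]
  rw [div_le_iff₀ (sub_pos.2 hlt), zero_mul] at hslope_nonpos
  linarith

theorem le_of_hasDerivAt_nonpos (hab : a ≤ b) (hf' : ∀ x ∈ Ioo a b, HasDerivAt f (f' x) x)
    (hf : ContinuousOn f (Icc a b)) (hle : ∀ x ∈ Ioo a b, f' x ≤ 0) : f b ≤ f a := by
  have := sub_le_sub_of_hasDerivAt_le hab hf' (fun x _ => hasDerivAt_const x 0) hf
    continuousOn_const hle
  linarith

theorem le_of_hasDerivAt_nonneg (hab : a ≤ b) (hf' : ∀ x ∈ Ioo a b, HasDerivAt f (f' x) x)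
    (hf : ContinuousOn f (Icc a b)) (hle : ∀ x ∈ Ioo a b, 0 ≤ f' x) : f a ≤ f b := by
  have := sub_le_sub_of_hasDerivAt_le hab (fun x _ => hasDerivAt_const x 0) hf'
    continuousOn_const hf hle
  linarith

theorem tendsto_div_atTop_of_tendsto_deriv {B : ℝ} (hf : ∀ x, HasDerivAt f (f' x) x)
    (hf' : Tendsto f' atTop (𝓝 B)) : Tendsto (fun x => f x / x) atTop (𝓝 B) := by
  set g : ℝ → ℝ := fun x => f x - B * x
  have hg : g =o[atTop] id := by
    refine IsLittleO.of_bound fun c hc => ?_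
    obtain ⟨x₁, hx₁⟩ := Metric.tendsto_atTop.1 hf' (c / 2) (half_pos hc)
    set x₀ := max x₁ 0
    filter_upwards [eventually_ge_atTop (max x₀ (2 * |g x₀| / c))] with z hz
    have hx₀z : x₀ ≤ z := le_of_max_le_left hz
    have hgz : |g x₀| ≤ c / 2 * z := by
      have := le_of_max_le_right hz
      rw [div_le_iff₀ hc] at this
      linarith
    have hincr : ‖g z - g x₀‖ ≤ c / 2 * (z - x₀) := by
      refine norm_image_sub_le_of_norm_deriv_le_segment' (f' := fun x => f' x - B)
        (fun x _ => ((hf x).sub ((hasDerivAt_id x).const_mul B)).hasDerivWithinAt.congr_deriv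
          (by simp)) (fun x hx => ?_) z ⟨hx₀z, le_rfl⟩
      exact (hx₁ x (le_trans (le_max_left _ _) hx.1)).le
    have hx₀ : 0 ≤ x₀ := le_max_right _ _
    rw [Real.norm_eq_abs, Real.norm_eq_abs] at *
    rw [id, abs_of_nonneg (hx₀.trans hx₀z)]
    linarith [abs_sub_abs_le_abs_sub (g z) (g x₀), mul_nonneg hc.le hx₀]
  have hlim := hg.tendsto_div_nhds_zero.add_const B
  rw [zero_add] at hlim
  refine hlim.congr' ?_
  filter_upwards [eventually_ne_atTop 0] with x hx
  simp only [g, id]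
  field_simp
  ring

end Comparison

theorem hasDerivAt_exp_const_mul (c x : ℝ) :
    HasDerivAt (fun x => exp (c * x)) (c * exp (c * x)) x := by
  simpa [mul_comm] using ((hasDerivAt_id x).const_mul c).exp

def odeEnergy (γ : ℝ) (φ : ℝ → ℝ) (z : ℝ) : ℝ :=
  deriv φ z ^ 2 / 2 + φ z ^ 2 / 2 - γ * φ z ^ 3 / 3

namespace SolvesPhiODE

variable {φ : ℝ → ℝ} {γ z : ℝ}

theorem hasDerivAt (h : SolvesPhiODE φ γ) (z : ℝ) : HasDerivAt φ (deriv φ z) z :=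
  (h.1 z).1.hasDerivAt

theorem hasDerivAt_deriv (h : SolvesPhiODE φ γ) (hz : 0 < z) :
    HasDerivAt (deriv φ) (γ * φ z ^ 2 - φ z - 2 * deriv φ z) z :=
  (h.1 z).2.hasDerivAt.congr_deriv (by linarith [h.2.1 z hz])

theorem continuous (h : SolvesPhiODE φ γ) : Continuous φ :=
  continuous_iff_continuousAt.2 fun z => (h.1 z).1.continuousAt

theorem continuous_deriv (h : SolvesPhiODE φ γ) : Continuous (deriv φ) :=
  continuous_iff_continuousAt.2 fun z => (h.1 z).2.continuousAt

theorem hasDerivAt_exp_mul (h : SolvesPhiODE φ γ) (z : ℝ) :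
    HasDerivAt (fun z => exp z * φ z) (exp z * (φ z + deriv φ z)) z :=
  ((hasDerivAt_exp z).mul (h.hasDerivAt z)).congr_deriv (by ring)

theorem hasDerivAt_exp_mul_add_deriv (h : SolvesPhiODE φ γ) (hz : 0 < z) :
    HasDerivAt (fun z => exp z * (φ z + deriv φ z)) (γ * exp z * φ z ^ 2) z :=
  ((hasDerivAt_exp z).mul ((h.hasDerivAt z).add (h.hasDerivAt_deriv hz))).congr_deriv
    (by rw [Pi.add_apply]; ring)

theorem hasDerivAt_exp_two_mul_mul_deriv (h : SolvesPhiODE φ γ) (hz : 0 < z) :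
    HasDerivAt (fun z => exp (2 * z) * deriv φ z) (exp (2 * z) * φ z * (γ * φ z - 1)) z :=
  ((hasDerivAt_exp_const_mul 2 z).mul (h.hasDerivAt_deriv hz)).congr_deriv (by ring)

theorem hasDerivAt_odeEnergy (h : SolvesPhiODE φ γ) (hz : 0 < z) :
    HasDerivAt (odeEnergy γ φ) (-2 * deriv φ z ^ 2) z := by
  have hφ := h.hasDerivAt z
  exact ((((h.hasDerivAt_deriv hz).pow 2).div_const 2).add ((hφ.pow 2).div_const 2)
    |>.sub (((hφ.pow 3).const_mul γ).div_const 3)).congr_deriv (by ring)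

theorem odeEnergy_le (h : SolvesPhiODE φ γ) (hz : 0 ≤ z) :
    odeEnergy γ φ z ≤ odeEnergy γ φ 0 :=
  le_of_hasDerivAt_nonpos hz (fun x hx => h.hasDerivAt_odeEnergy hx.1)
    (by unfold odeEnergy; have := h.continuous; have := h.continuous_deriv; fun_prop)
    fun x _ => by nlinarith [sq_nonneg (deriv φ x)]

theorem one_div_two_mul_le_exp_mul_add_deriv (h : SolvesPhiODE φ γ) (hγ : 0 < γ)
    (hz : 0 ≤ z) : 1 / (2 * γ) ≤ exp z * (φ z + deriv φ z) := by
  have hv := le_of_hasDerivAt_nonneg hz (fun x hx => h.hasDerivAt_exp_mul_add_deriv hx.1)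
    (by have := h.continuous; have := h.continuous_deriv; fun_prop)
    fun x _ => by have := exp_pos x; positivity
  simpa [h.2.2.1, h.2.2.2] using hv

theorem pos (h : SolvesPhiODE φ γ) (hγ : 0 < γ) (hz : 0 ≤ z) : 0 < φ z := by
  have hψ := le_of_hasDerivAt_nonneg hz (fun x _ => h.hasDerivAt_exp_mul x)
    (by have := h.continuous; fun_prop)
    fun x hx => le_trans (by positivity) (h.one_div_two_mul_le_exp_mul_add_deriv hγ hx.1.le)
  rw [h.2.2.1, exp_zero, one_mul] at hψ
  exact pos_of_mul_pos_right (lt_of_lt_of_le (by positivity) hψ) (exp_pos z).le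

theorem neg_one_le_deriv_div (h : SolvesPhiODE φ γ) (hγ : 0 < γ) (hz : 0 ≤ z) :
    -1 ≤ deriv φ z / φ z := by
  rw [le_div_iff₀ (h.pos hγ hz)]
  have := h.one_div_two_mul_le_exp_mul_add_deriv hγ hz
  have : 0 < φ z + deriv φ z :=
    pos_of_mul_pos_right (lt_of_lt_of_le (by positivity) this) (exp_pos z).le
  linarith

/-- The energy never exceeds `1/(12γ²)`, its value at `0`, while at the level `φ = 1/γ` it is at
least `1/(6γ²)`. -/
theorem mul_lt_one (h : SolvesPhiODE φ γ) (hγ : 0 < γ) (hz : 0 ≤ z) : γ * φ z < 1 := by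
  by_contra! hge
  have hφ0 : φ 0 ≤ 1 / γ := by
    rw [h.2.2.1]; exact one_div_le_one_div_of_le hγ (by linarith)
  obtain ⟨y, hy, hφy⟩ := intermediate_value_Icc hz h.continuous.continuousOn
    ⟨hφ0, (div_le_iff₀' hγ).2 hge⟩
  have hE := h.odeEnergy_le hy.1
  simp only [odeEnergy, hφy, h.2.2.1, h.2.2.2] at hE
  field_simp at hE
  nlinarith [sq_nonneg (deriv φ y)]

theorem deriv_nonpos (h : SolvesPhiODE φ γ) (hγ : 0 < γ) (hz : 0 ≤ z) : deriv φ z ≤ 0 := by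
  have hw := le_of_hasDerivAt_nonpos hz (fun x hx => h.hasDerivAt_exp_two_mul_mul_deriv hx.1)
    (by have := h.continuous_deriv; fun_prop)
    fun x hx => mul_nonpos_of_nonneg_of_nonpos (mul_pos (exp_pos _) (h.pos hγ hx.1.le)).le
      (by linarith [h.mul_lt_one hγ hx.1.le])
  rw [h.2.2.2, mul_zero] at hw
  exact nonpos_of_mul_nonpos_right hw (exp_pos _)

theorem antitoneOn (h : SolvesPhiODE φ γ) (hγ : 0 < γ) : AntitoneOn φ (Ici 0) :=
  fun _ hx _ _ hxy => le_of_hasDerivAt_nonpos hxy (fun t _ => h.hasDerivAt t)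
    h.continuous.continuousOn fun _ ht => h.deriv_nonpos hγ (le_trans hx ht.1.le)

theorem mul_le_half (h : SolvesPhiODE φ γ) (hγ : 0 < γ) (hz : 0 ≤ z) : γ * φ z ≤ 1 / 2 :=
  calc γ * φ z ≤ γ * φ 0 :=
        mul_le_mul_of_nonneg_left (h.antitoneOn hγ self_mem_Ici hz hz) hγ.le
    _ = 1 / 2 := by rw [h.2.2.1]; field_simp

/-- On `[0, z]`, `(e^{2x} φ')' = e^{2x} φ (γφ - 1) ≤ -e^{2x} φ(x)/2 ≤ -e^{2x} φ(z)/2`. -/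
theorem exp_two_mul_mul_deriv_le (h : SolvesPhiODE φ γ) (hγ : 0 < γ) (hz : 0 ≤ z) :
    exp (2 * z) * deriv φ z ≤ -(φ z / 4) * (exp (2 * z) - 1) := by
  have hw := sub_le_sub_of_hasDerivAt_le hz
    (fun x hx => h.hasDerivAt_exp_two_mul_mul_deriv hx.1)
    (fun x _ => (hasDerivAt_exp_const_mul 2 x).const_mul (-(φ z / 4)))
    (by have := h.continuous_deriv; fun_prop) (by fun_prop) fun x hx => ?_
  · simp only [h.2.2.2, mul_zero, exp_zero, mul_one] at hw
    linarith
  have hφx := h.pos hγ hx.1.le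
  have hφzx : φ z ≤ φ x := h.antitoneOn hγ hx.1.le (hx.1.le.trans hx.2.le) hx.2.le
  have hφ_bound : φ x * (γ * φ x - 1) ≤ -(φ z / 2) := by
    nlinarith [h.mul_le_half hγ hx.1.le]
  nlinarith [mul_le_mul_of_nonneg_left hφ_bound (exp_pos (2 * x)).le]

theorem deriv_neg (h : SolvesPhiODE φ γ) (hγ : 0 < γ) (hz : 0 < z) : deriv φ z < 0 := by
  have hw := h.exp_two_mul_mul_deriv_le hγ hz.le
  have he : 1 < exp (2 * z) := one_lt_exp_iff.2 (by linarith)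
  have hφ := h.pos hγ hz.le
  exact neg_of_mul_neg_right (hw.trans_lt (by nlinarith)) (exp_pos _).le

theorem exists_lt (h : SolvesPhiODE φ γ) (hγ : 0 < γ) {ε : ℝ} (hε : 0 < ε) :
    ∃ z, 0 ≤ z ∧ φ z < ε := by
  by_contra! hge
  have hderiv : ∀ x, 1 ≤ x → deriv φ x ≤ -(ε / 8) := by
    intro x hx
    have hw := h.exp_two_mul_mul_deriv_le hγ (by linarith)
    have he : 2 ≤ exp (2 * x) := by linarith [add_one_le_exp (2 * x)]
    nlinarith [hge x (by linarith)]
  set b := 1 + 8 * φ 1 / ε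
  have hb : ε / 8 * (b - 1) = φ 1 := by simp only [b]; field_simp; ring
  have hb1 : 1 ≤ b := by
    have := h.pos hγ zero_le_one
    have : 0 ≤ 8 * φ 1 / ε := by positivity
    linarith
  have hφb := sub_le_sub_of_hasDerivAt_le hb1 (fun x _ => h.hasDerivAt x)
    (fun x _ => (hasDerivAt_id x).const_mul (-(ε / 8))) h.continuous.continuousOn
    (by fun_prop) fun x hx => by simpa using hderiv x hx.1.le
  simp only [id] at hφb
  linarith [hge b (by linarith)]

theorem hasDerivAt_exp_mul_deriv_add (h : SolvesPhiODE φ γ) (hz : 0 < z) :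
    HasDerivAt (fun z => exp (5 / 4 * z) * (deriv φ z + 3 / 4 * φ z))
      (exp (5 / 4 * z) * φ z * (γ * φ z - 1 / 16)) z :=
  ((hasDerivAt_exp_const_mul _ z).mul ((h.hasDerivAt_deriv hz).add
    ((h.hasDerivAt z).const_mul _))).congr_deriv (by simp only [Pi.add_apply]; ring)

theorem hasDerivAt_exp_const_mul_mul (h : SolvesPhiODE φ γ) (c z : ℝ) :
    HasDerivAt (fun z => exp (c * z) * φ z) (exp (c * z) * (deriv φ z + c * φ z)) z :=
  ((hasDerivAt_exp_const_mul _ z).mul (h.hasDerivAt z)).congr_deriv (by ring)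

/-- Once `γ φ ≤ 1/16`, the equation gives `(D + 5/4)(D + 3/4) φ = φ (γ φ - 1/16) ≤ 0`. -/
theorem exp_mul_deriv_add_le (h : SolvesPhiODE φ γ) (hγ : 0 < γ) {z₀ : ℝ} (hz₀ : 0 ≤ z₀)
    (hsmall : γ * φ z₀ ≤ 1 / 16) (hz : z₀ ≤ z) :
    exp (5 / 4 * z) * (deriv φ z + 3 / 4 * φ z) ≤
      exp (5 / 4 * z₀) * (deriv φ z₀ + 3 / 4 * φ z₀) :=
  le_of_hasDerivAt_nonpos hz (fun x hx => h.hasDerivAt_exp_mul_deriv_add (hz₀.trans_lt hx.1))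
    (by have := h.continuous; have := h.continuous_deriv; fun_prop) fun x hx => by
      have hφx := h.pos hγ (hz₀.trans hx.1.le)
      have hφ_le : φ x ≤ φ z₀ := h.antitoneOn hγ hz₀ (hz₀.trans hx.1.le) hx.1.le
      have : γ * φ x ≤ 1 / 16 := by nlinarith
      exact mul_nonpos_of_nonneg_of_nonpos (by positivity) (by linarith)

theorem exists_exp_mul_le (h : SolvesPhiODE φ γ) (hγ : 0 < γ) :
    ∃ z₀ M, 0 ≤ z₀ ∧ ∀ z, z₀ ≤ z → exp (3 / 4 * z) * φ z ≤ M := by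
  obtain ⟨z₀, hz₀, hφz₀⟩ := h.exists_lt hγ (ε := 1 / (16 * γ)) (by positivity)
  have hsmall : γ * φ z₀ ≤ 1 / 16 := by
    rw [lt_div_iff₀ (by positivity)] at hφz₀; linarith
  set K := |exp (5 / 4 * z₀) * (deriv φ z₀ + 3 / 4 * φ z₀)|
  refine ⟨z₀, exp (3 / 4 * z₀) * φ z₀ + 2 * K, hz₀, fun z hz => ?_⟩
  have hP := sub_le_sub_of_hasDerivAt_le hz (fun x _ => h.hasDerivAt_exp_const_mul_mul (3 / 4) x)
    (fun x _ => (hasDerivAt_exp_const_mul (-1 / 2) x).const_mul (-2 * K))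
    (by have := h.continuous; fun_prop) (by fun_prop) fun x hx => ?_
  · have he : exp (-1 / 2 * z₀) ≤ 1 := exp_le_one_iff.2 (by linarith)
    have hK : 0 ≤ K := abs_nonneg _
    nlinarith [exp_pos (-1 / 2 * z)]
  have hq := (h.exp_mul_deriv_add_le hγ hz₀ hsmall hx.1.le).trans (le_abs_self _)
  have hsplit : exp (3 / 4 * x) = exp (-1 / 2 * x) * exp (5 / 4 * x) := by
    rw [← exp_add]; ring_nf
  rw [hsplit, mul_assoc]
  nlinarith [mul_le_mul_of_nonneg_left hq (exp_pos (-1 / 2 * x)).le]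

theorem exists_tendsto_exp_mul_add_deriv (h : SolvesPhiODE φ γ) (hγ : 0 < γ) :
    ∃ B, 0 < B ∧ Tendsto (fun z => exp z * (φ z + deriv φ z)) atTop (𝓝 B) := by
  obtain ⟨z₀, M, hz₀, hM⟩ := h.exists_exp_mul_le hγ
  set v : ℝ → ℝ := fun z => exp z * (φ z + deriv φ z)
  have hv_cont : Continuous v := by have := h.continuous; have := h.continuous_deriv; fun_prop
  have hv_mono : MonotoneOn v (Ici z₀) := fun x hx _ _ hxy =>
    le_of_hasDerivAt_nonneg hxy
      (fun t ht => h.hasDerivAt_exp_mul_add_deriv (hz₀.trans_lt (lt_of_le_of_lt hx ht.1)))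
      hv_cont.continuousOn fun t _ => by have := exp_pos t; positivity
  have hv_bdd : ∀ z, z₀ ≤ z → v z ≤ v z₀ + 2 * γ * M ^ 2 := by
    intro z hz
    have hv := sub_le_sub_of_hasDerivAt_le hz
      (fun x hx => h.hasDerivAt_exp_mul_add_deriv (hz₀.trans_lt hx.1))
      (fun x _ => (hasDerivAt_exp_const_mul (-1 / 2) x).const_mul (-2 * γ * M ^ 2))
      hv_cont.continuousOn (by fun_prop) fun x hx => ?_
    · have he : exp (-1 / 2 * z₀) ≤ 1 := exp_le_one_iff.2 (by linarith)
      have hγM : 0 ≤ γ * M ^ 2 := by positivity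
      simp only [v]
      nlinarith [exp_pos (-1 / 2 * z)]
    have hP0 : 0 ≤ exp (3 / 4 * x) * φ x :=
      (mul_pos (exp_pos _) (h.pos hγ (by linarith [hx.1]))).le
    have hsq := pow_le_pow_left₀ hP0 (hM x hx.1.le) 2
    have hsplit : exp x * φ x ^ 2 = exp (-1 / 2 * x) * (exp (3 / 4 * x) * φ x) ^ 2 := by
      rw [mul_pow, sq (exp _), ← mul_assoc, ← mul_assoc, ← exp_add, ← exp_add]; ring_nf
    rw [mul_assoc, hsplit]
    nlinarith [mul_le_mul_of_nonneg_left hsq (exp_pos (-1 / 2 * x)).le]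
  have hlim : Tendsto v atTop (𝓝 (⨆ x : Ici z₀, v x)) :=
    tendsto_comp_val_Ici_atTop.1 <| tendsto_atTop_ciSup (fun x y hxy => hv_mono x.2 y.2 hxy)
      ⟨_, by rintro _ ⟨x, rfl⟩; exact hv_bdd x x.2⟩
  have hB : 1 / (2 * γ) ≤ ⨆ x : Ici z₀, v x := ge_of_tendsto hlim <|
    eventually_atTop.2 ⟨0, fun z hz => h.one_div_two_mul_le_exp_mul_add_deriv hγ hz⟩
  exact ⟨_, lt_of_lt_of_le (by positivity) hB, hlim⟩

end SolvesPhiODE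

/-- Lemma 4.4: properties of the solution `φ` of `φ'' + 2φ' + φ - γφ² = 0`. -/
theorem phi_properties (γ : ℝ) (hγ : 1 < γ)
    (φ : ℝ → ℝ) (hφ : SolvesPhiODE φ γ) :
    (∀ z : ℝ, 0 < z → deriv φ z < 0 ∧ -1 ≤ deriv φ z / φ z) ∧
    ∃ B : ℝ, 0 < B ∧
      Filter.Tendsto (fun z => φ z / (z * Real.exp (-z))) Filter.atTop (nhds B) := by
  have hγ₀ : 0 < γ := zero_lt_one.trans hγ
  obtain ⟨B, hB, hv⟩ := hφ.exists_tendsto_exp_mul_add_deriv hγ₀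
  refine ⟨fun z hz => ⟨hφ.deriv_neg hγ₀ hz, hφ.neg_one_le_deriv_div hγ₀ hz.le⟩, B, hB, ?_⟩
  refine (tendsto_div_atTop_of_tendsto_deriv hφ.hasDerivAt_exp_mul hv).congr' ?_
  filter_upwards [eventually_ne_atTop 0] with z hz
  rw [exp_neg]
  field_simp
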